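/- arXiv:2411.01698 — 2 statements merged into one kernel-verified Lean document; each statement's English description precedes it below -/
import Mathlib

section
/- If u is harmonic in a neighborhood of x₀ = T⁻¹(y₀) (with x₀ ≠ e₁) where T⁻¹(y) = e₁ - (y + e₁/2)/|y + e₁/2|², then v(y) = |y + e₁/2|^{2-n} u(T⁻¹(y)) is harmonic in a neighborhood of y₀. -/
/-- `u` is harmonic on a set: twice continuously differentiable with vanishing Laplacian. -/
def IsHarmonicOnSet {n : ℕ} (u : EuclideanSpace ℝ (Fin n) → ℝ)
    (s : Set (EuclideanSpace ℝ (Fin n))) : Prop :=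
  ContDiffOn ℝ 2 u s ∧ ∀ x ∈ s,
    (∑ i : Fin n, fderiv ℝ (fun z => fderiv ℝ u z (EuclideanSpace.single i 1)) x
      (EuclideanSpace.single i 1)) = 0

open scoped RealInnerProductSpace

section General
variable {E' : Type*} [NormedAddCommGroup E'] [InnerProductSpace ℝ E']

lemma my_hasFDerivAt_inner_self (w : E') :
    HasFDerivAt (fun z : E' => ⟪z, z⟫) ((2:ℝ) • (innerSL ℝ w)) w := by
  have h := (hasFDerivAt_id w).inner ℝ (hasFDerivAt_id w)
  refine h.congr_fderiv ?_
  ext h'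
  simp [real_inner_comm, two_smul]

lemma my_hasFDerivAt_normsq (w : E') :
    HasFDerivAt (fun z : E' => ‖z‖^2) ((2:ℝ) • (innerSL ℝ w)) w := by
  have h := my_hasFDerivAt_inner_self w
  have : (fun z : E' => ⟪z, z⟫) = (fun z : E' => ‖z‖^2) := by
    funext z; rw [real_inner_self_eq_norm_sq]
  rwa [this] at h

lemma my_hasFDerivAt_norm_rpow (s : ℝ) {w : E'} (hw : w ≠ 0) :
    HasFDerivAt (fun z : E' => ‖z‖ ^ s) ((s * ‖w‖ ^ (s - 2)) • (innerSL ℝ w)) w := by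
  have hq : ⟪w, w⟫ ≠ 0 := by
    simpa [real_inner_self_eq_norm_sq] using pow_ne_zero 2 (norm_ne_zero_iff.2 hw)
  have hfun : (fun z : E' => ‖z‖ ^ s) = fun z : E' => (⟪z, z⟫) ^ (s / 2) := by
    funext z
    rw [real_inner_self_eq_norm_sq, ← Real.rpow_natCast ‖z‖ 2, ← Real.rpow_mul (norm_nonneg z)]
    norm_num
    congr 1
    ring
  have hd : HasDerivAt (fun t : ℝ => t ^ (s / 2)) ((s / 2) * ⟪w, w⟫ ^ (s / 2 - 1)) ⟪w, w⟫ :=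
    Real.hasDerivAt_rpow_const (Or.inl hq)
  have h := hd.comp_hasFDerivAt (f := fun z : E' => ⟪z, z⟫) w (my_hasFDerivAt_inner_self w)
  rw [hfun]
  refine h.congr_fderiv ?_
  ext v
  have hnorm : (⟪w, w⟫) ^ (s / 2 - 1) = ‖w‖ ^ (s - 2) := by
    rw [real_inner_self_eq_norm_sq, ← Real.rpow_natCast ‖w‖ 2, ← Real.rpow_mul (norm_nonneg w)]
    congr 1
    ring
  rw [hnorm]
  simp [hnorm]
  try ring

lemma my_hasFDerivAt_Qinv {w : E'} (hw : w ≠ 0) :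
    HasFDerivAt (fun z : E' => (‖z‖^2)⁻¹)
      ((-((‖w‖^2)^2)⁻¹) • ((2:ℝ) • (innerSL ℝ w))) w := by
  have hQ0 : ‖w‖^2 ≠ 0 := pow_ne_zero 2 (norm_ne_zero_iff.2 hw)
  exact (hasDerivAt_inv hQ0).comp_hasFDerivAt (f := fun z : E' => ‖z‖^2) w
    (my_hasFDerivAt_normsq w)

end General

variable {n : ℕ}
local notation "E" => EuclideanSpace ℝ (Fin n)
local notation "ε" i => EuclideanSpace.single i (1:ℝ)

lemma my_sum_basis (w : E) : ∑ i : Fin n, ⟪w, ε i⟫ • (ε i : E) = w := by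
  have h := (EuclideanSpace.basisFun (Fin n) ℝ).toBasis.sum_repr w
  simpa [EuclideanSpace.basisFun_apply, EuclideanSpace.inner_single_right, real_inner_comm,
    EuclideanSpace.basisFun_repr] using h

lemma my_sum_eval (w : E) (T : EuclideanSpace ℝ (Fin n) →L[ℝ] ℝ) :
    ∑ i : Fin n, ⟪w, ε i⟫ * T (ε i) = T w := by
  calc ∑ i : Fin n, ⟪w, ε i⟫ * T (ε i) = ∑ i : Fin n, T (⟪w, ε i⟫ • (ε i : E)) := by
        simp [smul_eq_mul]
    _ = T (∑ i : Fin n, ⟪w, ε i⟫ • (ε i : E)) := by rw [map_sum]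
    _ = T w := by rw [my_sum_basis]

lemma my_inner_single_self (i : Fin n) : ⟪(ε i : E), ε i⟫ = 1 := by
  simp [EuclideanSpace.inner_single_right, EuclideanSpace.single_apply]

noncomputable def Gf (e₁ : E) (z : E) : E := e₁ - (‖z‖ ^ 2)⁻¹ • z

noncomputable def mf (i : Fin n) (z : E) : E :=
  (2 * ((‖z‖^2)⁻¹ * (‖z‖^2)⁻¹) * ⟪z, ε i⟫) • z - (‖z‖^2)⁻¹ • (ε i : E)

noncomputable def Af (e₁ : E) (u : EuclideanSpace ℝ (Fin n) → ℝ) (p : ℝ) (i : Fin n) (z : E) : ℝ :=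
  ‖z‖ ^ p * (fderiv ℝ u (Gf e₁ z)) (mf i z)
    + u (Gf e₁ z) * (p * (‖z‖ ^ (p - 2) * ⟪z, ε i⟫))

noncomputable def DGf (w : E) : E →L[ℝ] E :=
  -((‖w‖^2)⁻¹ • (ContinuousLinearMap.id ℝ (EuclideanSpace ℝ (Fin n)))
    + ((-((‖w‖^2)^2)⁻¹) • ((2:ℝ) • (innerSL ℝ w))).smulRight w)

lemma my_hasFDerivAt_Gf (e₁ : E) {w : E} (hw : w ≠ 0) :
    HasFDerivAt (Gf e₁) (DGf w) w :=
  ((my_hasFDerivAt_Qinv hw).smul (hasFDerivAt_id w)).const_sub e₁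

lemma DGf_apply {w : E} (v : E) :
    DGf w v = (2 * ((‖w‖^2)⁻¹ * (‖w‖^2)⁻¹) * ⟪w, v⟫) • w - (‖w‖^2)⁻¹ • v := by
  simp [DGf, smul_smul, real_inner_comm]
  module

lemma my_fderiv_F (e₁ : E) (u : EuclideanSpace ℝ (Fin n) → ℝ) {U : Set (EuclideanSpace ℝ (Fin n))}
    (hU : IsOpen U) (hucd : ContDiffOn ℝ 2 u U) (p : ℝ) {z : E} (hz : z ≠ 0)
    (hzU : Gf e₁ z ∈ U) (i : Fin n) :
    fderiv ℝ (fun y => ‖y‖ ^ p * u (Gf e₁ y)) z (ε i) = Af e₁ u p i z := by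
  have hdu : DifferentiableAt ℝ u (Gf e₁ z) :=
    (hucd.differentiableOn two_ne_zero).differentiableAt (hU.mem_nhds hzU)
  have hF := (my_hasFDerivAt_norm_rpow p hz).mul (hdu.hasFDerivAt.comp z (my_hasFDerivAt_Gf e₁ hz))
  have hF' : HasFDerivAt (fun y => ‖y‖ ^ p * u (Gf e₁ y))
      (‖z‖ ^ p • (fderiv ℝ u (Gf e₁ z)).comp (DGf z)
        + (u (Gf e₁ z)) • (p * ‖z‖ ^ (p - 2)) • (innerSL ℝ) z) z := hF
  rw [hF'.fderiv]
  simp [Af, mf, DGf_apply, map_sub, map_smul, smul_eq_mul]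
  exact Or.inl (by ring)

section PerI
variable (e₁ : EuclideanSpace ℝ (Fin n)) (u : EuclideanSpace ℝ (Fin n) → ℝ)
  {U : Set (EuclideanSpace ℝ (Fin n))} (p : ℝ)

/-- coefficients at the point `w` -/
noncomputable def αc (w : E) : ℝ :=
  ‖w‖ ^ p * (4 * ((‖w‖^2)⁻¹)^4 * ((fderiv ℝ (fderiv ℝ u) (Gf e₁ w)) w) w
      - 8 * (‖w‖^2)⁻¹ * ((‖w‖^2)^2)⁻¹ * (fderiv ℝ u (Gf e₁ w)) w)
    + 4 * p * ‖w‖ ^ (p-2) * ((‖w‖^2)⁻¹)^2 * (fderiv ℝ u (Gf e₁ w)) w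
    + u (Gf e₁ w) * p * (p-2) * ‖w‖ ^ (p-2-2)

noncomputable def βc (w : E) : ℝ :=
  2 * ‖w‖ ^ p * ((‖w‖^2)⁻¹)^2 + 2 * ‖w‖ ^ p * ((‖w‖^2)^2)⁻¹ - 2 * p * ‖w‖ ^ (p-2) * (‖w‖^2)⁻¹

noncomputable def γc (w : E) : ℝ := -2 * ‖w‖ ^ p * ((‖w‖^2)⁻¹)^3

noncomputable def κc (w : E) : ℝ := ‖w‖ ^ p * ((‖w‖^2)⁻¹)^2

noncomputable def Cc (w : E) : ℝ :=
  2 * ‖w‖ ^ p * ((‖w‖^2)⁻¹)^2 * (fderiv ℝ u (Gf e₁ w)) w + u (Gf e₁ w) * p * ‖w‖ ^ (p-2)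

lemma my_Af_deriv (hU : IsOpen U) (hucd : ContDiffOn ℝ 2 u U) {w : E} (hw : w ≠ 0)
    (hxU : Gf e₁ w ∈ U) (i : Fin n) :
    fderiv ℝ (Af e₁ u p i) w (ε i)
      = w i * (αc e₁ u p w * w i
          + βc p w * (fderiv ℝ u (Gf e₁ w)) (ε i)
          + γc p w * ((fderiv ℝ (fderiv ℝ u) (Gf e₁ w)) w) (ε i)
          + γc p w * ((fderiv ℝ (fderiv ℝ u) (Gf e₁ w)) (ε i)) w)
        + κc p w * ((fderiv ℝ (fderiv ℝ u) (Gf e₁ w)) (ε i)) (ε i)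
        + Cc e₁ u p w := by
  have hQinv := my_hasFDerivAt_Qinv hw
  have hinner_i : HasFDerivAt (fun z : E => ⟪z, ε i⟫) (innerSL ℝ (ε i : E)) w := by
    have h := (innerSL ℝ (ε i : E)).hasFDerivAt (x := w)
    have he : (fun z : E => ⟪z, ε i⟫) = fun z : E => (innerSL ℝ (ε i : E)) z := by
      funext z; exact real_inner_comm _ _
    rwa [he]
  have hscal := ((hQinv.mul hQinv).const_mul 2).mul hinner_i
  have hm : HasFDerivAt (mf i) _ w :=
    (hscal.smul (hasFDerivAt_id w)).sub (hQinv.smul_const (ε i : E))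
  have hG := my_hasFDerivAt_Gf e₁ hw
  have hcd : ContDiffAt ℝ 2 u (Gf e₁ w) := hucd.contDiffAt (hU.mem_nhds hxU)
  have hH : HasFDerivAt (fderiv ℝ u) (fderiv ℝ (fderiv ℝ u) (Gf e₁ w)) (Gf e₁ w) :=
    ((hcd.fderiv_right (m := 1) (by norm_num)).differentiableAt one_ne_zero).hasFDerivAt
  have hfduG : HasFDerivAt (fun z => fderiv ℝ u (Gf e₁ z))
      ((fderiv ℝ (fderiv ℝ u) (Gf e₁ w)).comp (DGf w)) w := hH.comp w hG
  have hB := hfduG.clm_apply hm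
  have hnormp := my_hasFDerivAt_norm_rpow p hw
  have hdu : DifferentiableAt ℝ u (Gf e₁ w) :=
    (hucd.differentiableOn two_ne_zero).differentiableAt (hU.mem_nhds hxU)
  have hUg : HasFDerivAt (fun z => u (Gf e₁ z)) ((fderiv ℝ u (Gf e₁ w)).comp (DGf w)) w :=
    hdu.hasFDerivAt.comp w hG
  have hnormp2 := my_hasFDerivAt_norm_rpow (p-2) hw
  have hlast := (hnormp2.mul hinner_i).const_mul p
  have hAf : HasFDerivAt (Af e₁ u p i) _ w := (hnormp.mul hB).add (hUg.mul hlast)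
  rw [hAf.fderiv]
  simp [mf, DGf_apply, map_sub, map_smul, smul_eq_mul, my_inner_single_self,
    αc, βc, γc, κc, Cc, EuclideanSpace.inner_single_right]
  ring
end PerI

section Sum
variable (e₁ : EuclideanSpace ℝ (Fin n)) (u : EuclideanSpace ℝ (Fin n) → ℝ)
  {U : Set (EuclideanSpace ℝ (Fin n))} (p : ℝ)

lemma my_sum_basis' (w : E) : ∑ i : Fin n, w i • (ε i : E) = w := by
  have h := my_sum_basis w
  simpa [EuclideanSpace.inner_single_right] using h

lemma my_sum_eval' (w : E) (T : EuclideanSpace ℝ (Fin n) →L[ℝ] ℝ) :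
    ∑ i : Fin n, w i * T (ε i) = T w := by
  calc ∑ i : Fin n, w i * T (ε i) = ∑ i : Fin n, T (w i • (ε i : E)) := by
        simp [smul_eq_mul]
    _ = T (∑ i : Fin n, w i • (ε i : E)) := by rw [map_sum]
    _ = T w := by rw [my_sum_basis']

lemma my_isOpen_V (hU : IsOpen U) :
    IsOpen ({z : E | z ≠ 0} ∩ (Gf e₁) ⁻¹' U) := by
  have hcont : ContinuousOn (Gf e₁) {z : E | z ≠ 0} := by
    apply ContinuousOn.sub continuousOn_const
    apply ContinuousOn.smul (f := fun z : E => (‖z‖ ^ 2)⁻¹) _ continuous_id.continuousOn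
    exact ((continuous_norm.pow 2).continuousOn).inv₀
      (fun z hz => pow_ne_zero 2 (norm_ne_zero_iff.2 hz))
  exact hcont.isOpen_inter_preimage isOpen_ne hU

lemma my_lap_zero (hU : IsOpen U) (hucd : ContDiffOn ℝ 2 u U)
    (hulap : ∀ x ∈ U, (∑ i : Fin n,
      fderiv ℝ (fun z => fderiv ℝ u z (ε i)) x (ε i)) = 0)
    (hp : p = 2 - n) {w : E} (hw : w ≠ 0) (hxU : Gf e₁ w ∈ U) :
    ∑ i : Fin n,
      fderiv ℝ (fun z => fderiv ℝ (fun y => ‖y‖ ^ p * u (Gf e₁ y)) z (ε i)) w (ε i) = 0 := by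
  have hRpos : (0:ℝ) < ‖w‖ := norm_pos_iff.2 hw
  have hmemV : ({z : E | z ≠ 0} ∩ (Gf e₁) ⁻¹' U) ∈ nhds w :=
    (my_isOpen_V e₁ hU).mem_nhds ⟨hw, hxU⟩
  -- replace inner fderiv by Af
  have hstep1 : ∀ i : Fin n,
      fderiv ℝ (fun z => fderiv ℝ (fun y => ‖y‖ ^ p * u (Gf e₁ y)) z (ε i)) w (ε i)
        = fderiv ℝ (Af e₁ u p i) w (ε i) := by
    intro i
    have hev : (fun z => fderiv ℝ (fun y => ‖y‖ ^ p * u (Gf e₁ y)) z (ε i))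
        =ᶠ[nhds w] (Af e₁ u p i) := by
      filter_upwards [hmemV] with z hz
      exact my_fderiv_F e₁ u hU hucd p hz.1 hz.2 i
    rw [hev.fderiv_eq]
  -- second derivative facts
  have hcd : ContDiffAt ℝ 2 u (Gf e₁ w) := hucd.contDiffAt (hU.mem_nhds hxU)
  have hH : HasFDerivAt (fderiv ℝ u) (fderiv ℝ (fderiv ℝ u) (Gf e₁ w)) (Gf e₁ w) :=
    ((hcd.fderiv_right (m := 1) (by norm_num)).differentiableAt one_ne_zero).hasFDerivAt
  set H := fderiv ℝ (fderiv ℝ u) (Gf e₁ w) with hHdef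
  have hΔ : ∑ i : Fin n, (H (ε i)) (ε i) = 0 := by
    have h0 := hulap (Gf e₁ w) hxU
    have hi : ∀ i : Fin n, fderiv ℝ (fun z => fderiv ℝ u z (ε i)) (Gf e₁ w) (ε i)
        = (H (ε i)) (ε i) := by
      intro i
      have h := (hH.clm_apply (hasFDerivAt_const (EuclideanSpace.single i (1:ℝ)) (Gf e₁ w))).fderiv
      rw [h]
      simp
    rw [Finset.sum_congr rfl (fun i _ => hi i)] at h0
    exact h0
  -- the linear functional T
  set Du := fderiv ℝ u (Gf e₁ w) with hDudef
  set T : EuclideanSpace ℝ (Fin n) →L[ℝ] ℝ :=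
    αc e₁ u p w • innerSL ℝ w + βc p w • Du + γc p w • (H w + H.flip w) with hTdef
  have hTe : ∀ i : Fin n,
      (αc e₁ u p w * w i + βc p w * Du (ε i)
        + γc p w * (H w) (ε i) + γc p w * (H (ε i)) w) = T (ε i) := by
    intro i
    simp [hTdef, EuclideanSpace.inner_single_right]
    ring
  calc ∑ i : Fin n,
      fderiv ℝ (fun z => fderiv ℝ (fun y => ‖y‖ ^ p * u (Gf e₁ y)) z (ε i)) w (ε i)
      = ∑ i : Fin n, (w i * T (ε i) + κc p w * ((H (ε i)) (ε i)) + Cc e₁ u p w) := by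
        refine Finset.sum_congr rfl (fun i _ => ?_)
        rw [hstep1 i, my_Af_deriv e₁ u p hU hucd hw hxU i, ← hTe i]
    _ = T w + κc p w * (∑ i : Fin n, (H (ε i)) (ε i)) + (n : ℝ) * Cc e₁ u p w := by
        rw [Finset.sum_add_distrib, Finset.sum_add_distrib, ← Finset.mul_sum,
          my_sum_eval', Finset.sum_const, Finset.card_fin, nsmul_eq_mul]
    _ = 0 := by
        rw [hΔ, mul_zero, add_zero]
        have h2 : ‖w‖ ^ (p-2) = ‖w‖ ^ p * ((‖w‖^2)⁻¹) := by
          rw [Real.rpow_sub hRpos, ← Real.rpow_natCast ‖w‖ 2]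
          norm_num
          rw [div_eq_mul_inv]
        have h4 : ‖w‖ ^ (p-2-2) = ‖w‖ ^ p * ((‖w‖^2)⁻¹) * ((‖w‖^2)⁻¹) := by
          rw [Real.rpow_sub hRpos, h2, ← Real.rpow_natCast ‖w‖ 2]
          norm_num
          rw [div_eq_mul_inv]
        have hTw : T w = αc e₁ u p w * ‖w‖^2 + βc p w * Du w
            + γc p w * ((H w) w + (H w) w) := by
          rw [hTdef]
          simp only [ContinuousLinearMap.add_apply, ContinuousLinearMap.smul_apply,
            smul_eq_mul, ContinuousLinearMap.flip_apply, innerSL_apply_apply]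
          rw [real_inner_self_eq_norm_sq]
        rw [hTw]
        have hR0 : ‖w‖ ≠ 0 := ne_of_gt hRpos
        have r1 : ‖w‖ ^ (p-2) = ‖w‖^2 * ‖w‖^(p-2-2) := by
          rw [← Real.rpow_natCast ‖w‖ 2, ← Real.rpow_add hRpos]
          congr 1
          push_cast
          ring
        have r2 : ‖w‖ ^ p = ‖w‖^2 * (‖w‖^2 * ‖w‖^(p-2-2)) := by
          rw [← Real.rpow_natCast ‖w‖ 2, ← Real.rpow_add hRpos, ← Real.rpow_add hRpos]
          congr 1
          push_cast
          ring
        simp only [αc, βc, γc, Cc]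
        rw [r2, r1, hp]
        field_simp
        ring
end Sum

section Smooth
variable (e₁ : EuclideanSpace ℝ (Fin n)) (u : EuclideanSpace ℝ (Fin n) → ℝ)
  {U : Set (EuclideanSpace ℝ (Fin n))} (p : ℝ)

lemma my_norm_rpow_eq : (fun z : E => ‖z‖ ^ p) = fun z : E => (⟪z, z⟫) ^ (p / 2) := by
  funext z
  rw [real_inner_self_eq_norm_sq, ← Real.rpow_natCast ‖z‖ 2, ← Real.rpow_mul (norm_nonneg z)]
  norm_num
  congr 1
  ring

lemma my_contDiffOn_norm_rpow : ContDiffOn ℝ 2 (fun z : E => ‖z‖ ^ p) {z : E | z ≠ 0} := by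
  rw [my_norm_rpow_eq]
  intro z hz
  have hq : ⟪z, z⟫ ≠ 0 := by
    rw [real_inner_self_eq_norm_sq]
    exact pow_ne_zero 2 (norm_ne_zero_iff.2 hz)
  have hin : ContDiffAt ℝ 2 (fun x : E => ⟪x, x⟫) z := contDiffAt_id.inner ℝ contDiffAt_id
  exact (ContDiffAt.comp (g := fun t : ℝ => t ^ (p/2)) (f := fun x : E => ⟪x, x⟫) z
    (Real.contDiffAt_rpow_const_of_ne hq) hin).contDiffWithinAt

lemma my_contDiffOn_Gf : ContDiffOn ℝ 2 (Gf e₁) {z : E | z ≠ 0} := by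
  apply ContDiffOn.sub contDiffOn_const
  apply ContDiffOn.smul (f := fun z : E => (‖z‖ ^ 2)⁻¹) _ contDiffOn_id
  have hQ : ContDiffOn ℝ 2 (fun z : E => ‖z‖^2) {z : E | z ≠ 0} := by
    have : (fun z : E => ⟪z, z⟫) = (fun z : E => ‖z‖^2) := by
      funext z; rw [real_inner_self_eq_norm_sq]
    rw [← this]
    exact (contDiff_id.inner ℝ contDiff_id).contDiffOn
  exact hQ.inv (fun z hz => pow_ne_zero 2 (norm_ne_zero_iff.2 hz))

lemma my_contDiffOn_F (hU : IsOpen U) (hucd : ContDiffOn ℝ 2 u U) :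
    ContDiffOn ℝ 2 (fun z : E => ‖z‖ ^ p * u (Gf e₁ z))
      ({z : E | z ≠ 0} ∩ (Gf e₁) ⁻¹' U) := by
  apply ContDiffOn.mul ((my_contDiffOn_norm_rpow p).mono Set.inter_subset_left)
  exact hucd.comp ((my_contDiffOn_Gf e₁).mono Set.inter_subset_left) (fun z hz => hz.2)
end Smooth

lemma my_fderiv_comp_add_const {E' : Type*} [NormedAddCommGroup E'] [NormedSpace ℝ E']
    {F' : Type*} [NormedAddCommGroup F'] [NormedSpace ℝ F'] (f : E' → F') (c y : E') :
    fderiv ℝ (fun z => f (z + c)) y = fderiv ℝ f (y + c) := by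
  by_cases h : DifferentiableAt ℝ f (y + c)
  · have := (h.hasFDerivAt.comp y ((hasFDerivAt_id y).add_const c)).fderiv
    simpa [Function.comp_def] using this
  · rw [fderiv_zero_of_not_differentiableAt h, fderiv_zero_of_not_differentiableAt]
    intro hc
    apply h
    have h2 : DifferentiableAt ℝ ((fun z => f (z + c)) ∘ (fun z => z + (-c))) (y + c) :=
      DifferentiableAt.comp _ (by simpa using hc) ((differentiableAt_id).add_const _)
    have : ((fun z => f (z + c)) ∘ (fun z => z + (-c))) = f := by funext z; simp
    rwa [this] at h2

theorem stmt_6 (n : ℕ) (hn : 3 ≤ n)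
    (e₁ : EuclideanSpace ℝ (Fin n))
    (he₁ : e₁ = EuclideanSpace.single (⟨0, by omega⟩ : Fin n) (1 : ℝ))
    (Tinv : EuclideanSpace ℝ (Fin n) → EuclideanSpace ℝ (Fin n))
    (hTinv : ∀ y, Tinv y = e₁ - (‖y + (2 : ℝ)⁻¹ • e₁‖ ^ 2)⁻¹ • (y + (2 : ℝ)⁻¹ • e₁))
    (u : EuclideanSpace ℝ (Fin n) → ℝ) (y₀ : EuclideanSpace ℝ (Fin n))
    (hx₀ : Tinv y₀ ≠ e₁)
    (hu : ∃ U, IsOpen U ∧ Tinv y₀ ∈ U ∧ IsHarmonicOnSet u U) :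
    ∃ V, IsOpen V ∧ y₀ ∈ V ∧
      IsHarmonicOnSet (fun y => ‖y + (2 : ℝ)⁻¹ • e₁‖ ^ ((2 : ℝ) - n) * u (Tinv y)) V := by
  obtain ⟨U, hUopen, hmemU, hucd, hulap⟩ := hu
  set c : EuclideanSpace ℝ (Fin n) := (2 : ℝ)⁻¹ • e₁ with hc
  set p : ℝ := (2 : ℝ) - n with hp
  -- Tinv in terms of Gf
  have hTG : ∀ y, Tinv y = Gf e₁ (y + c) := by
    intro y
    rw [hTinv y, Gf]
  have hy₀ : y₀ + c ≠ 0 := by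
    intro h0
    apply hx₀
    rw [hTG y₀, h0, Gf]
    simp
  -- the function equals F ∘ translation
  have hveq : (fun y => ‖y + (2 : ℝ)⁻¹ • e₁‖ ^ ((2 : ℝ) - n) * u (Tinv y))
      = fun y => (fun z => ‖z‖ ^ p * u (Gf e₁ z)) (y + c) := by
    funext y
    rw [hTG y]
  refine ⟨(fun y => y + c) ⁻¹' ({z | z ≠ 0} ∩ (Gf e₁) ⁻¹' U), ?_, ?_, ?_⟩
  · exact (my_isOpen_V e₁ hUopen).preimage (continuous_id.add continuous_const)
  · refine ⟨hy₀, ?_⟩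
    show Gf e₁ (y₀ + c) ∈ U
    rw [← hTG y₀]
    exact hmemU
  constructor
  · rw [hveq]
    refine (my_contDiffOn_F e₁ u p hUopen hucd).comp ?_ (fun y hy => hy)
    exact (contDiff_id.add contDiff_const).contDiffOn
  · intro y hy
    rw [hveq]
    have key : ∀ i : Fin n,
        fderiv ℝ (fun z => fderiv ℝ
          (fun y' => (fun z' => ‖z'‖ ^ p * u (Gf e₁ z')) (y' + c)) z
          (EuclideanSpace.single i 1)) y (EuclideanSpace.single i 1)
        = fderiv ℝ (fun z' => fderiv ℝ (fun z => ‖z‖ ^ p * u (Gf e₁ z)) z'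
            (EuclideanSpace.single i 1)) (y + c) (EuclideanSpace.single i 1) := by
      intro i
      have h1 : (fun z => fderiv ℝ
          (fun y' => (fun z' => ‖z'‖ ^ p * u (Gf e₁ z')) (y' + c)) z
          (EuclideanSpace.single i 1))
          = fun z => (fun z' => fderiv ℝ (fun w => ‖w‖ ^ p * u (Gf e₁ w)) z'
              (EuclideanSpace.single i 1)) (z + c) := by
        funext z
        rw [my_fderiv_comp_add_const (fun w => ‖w‖ ^ p * u (Gf e₁ w)) c z]
      rw [h1, my_fderiv_comp_add_const
        (fun z' => fderiv ℝ (fun w => ‖w‖ ^ p * u (Gf e₁ w)) z' (EuclideanSpace.single i 1)) c y]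
    rw [Finset.sum_congr rfl (fun i _ => key i)]
    exact my_lap_zero e₁ u p hUopen hucd hulap hp hy.1 hy.2
end

section
/- Let n ≥ 3, a = sin θ sin θ₁, b = 1 - cos θ cos θ₁ with 0 ≤ θ₁ < θ ≤ π. Then b^{n/2 - 1} ∫₀^π (1 - cos θ cos θ₁ - cos φ sin θ sin θ₁)^{1 - n/2} (sin φ)^{n-3} dφ = Σ_{l=0}^∞ [(n/2 - 1)_{2l} Γ(n/2 - 1) Γ(l + 1/2) / ((2l)! Γ(n/2 + l - 1/2))] (a/b)^{2l}, where (λ)_k denotes the rising factorial. -/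
open Real Filter Finset Set MeasureTheory intervalIntegral


lemma poch_pos {s : ℝ} (hs : 0 < s) (k : ℕ) : 0 < ∏ i ∈ range k, (s + i) :=
  Finset.prod_pos fun i _ => by positivity

/-- master summability: `(k+1) * (s)_k / k! * y^k` is summable for `0 ≤ y < 1`. -/
lemma sum_master {s : ℝ} (hs : 0 < s) {y : ℝ} (hy0 : 0 ≤ y) (hy1 : y < 1) :
    Summable (fun k : ℕ =>
      ((k : ℝ) + 1) * (∏ i ∈ range k, (s + i)) / (k.factorial : ℝ) * y ^ k) := by
  set g : ℕ → ℝ := fun k =>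
    ((k : ℝ) + 1) * (∏ i ∈ range k, (s + i)) / (k.factorial : ℝ) * y ^ k with hg
  have hgpos : ∀ k, 0 ≤ g k := fun k => by
    have := (poch_pos hs k).le
    positivity
  set r : ℝ := (1 + y) / 2 with hr
  have hr1 : r < 1 := by rw [hr]; linarith
  have hyr : y < r := by rw [hr]; linarith
  apply summable_of_ratio_norm_eventually_le hr1
  have h1 : ∀ᶠ (k : ℕ) in atTop, (s : ℝ) ≤ k :=
    tendsto_natCast_atTop_atTop.eventually_ge_atTop s
  have h2 : ∀ᶠ (k : ℕ) in atTop, (s + 1) * y / (r - y) ≤ k := by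
    rcases eq_or_lt_of_le hy0 with h | h
    · exact Eventually.of_forall fun k => by
        rw [← h]; simp [Nat.cast_nonneg]
    · exact tendsto_natCast_atTop_atTop.eventually_ge_atTop _
  filter_upwards [h1, h2] with k hk1 hk2
  have hkr : (s + 1) * y ≤ (r - y) * k := by
    rw [div_le_iff₀ (by linarith)] at hk2; linarith [hk2]
  have key : ((k : ℝ) + 2) * (s + k) * y ≤ r * ((k : ℝ) + 1) ^ 2 := by
    have e1 : ((k : ℝ) + 2) * (s + k) ≤ ((k : ℝ) + 1) ^ 2 + (s + 1) * ((k : ℝ) + 1) := by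
      nlinarith [hk1]
    have e2 : (s + 1) * ((k : ℝ) + 1) * y ≤ (r - y) * ((k : ℝ) + 1) ^ 2 := by
      have hk0 : (0 : ℝ) ≤ (k : ℝ) + 1 := by positivity
      nlinarith [hkr, mul_le_mul_of_nonneg_left hkr hk0]
    nlinarith [mul_le_mul_of_nonneg_right e1 hy0]
  have hfac : (0:ℝ) < (k.factorial : ℝ) := by positivity
  have hstep : g (k + 1) = g k * (((k : ℝ) + 2) * (s + k) * y / ((k : ℝ) + 1) ^ 2) := by
    rw [hg]
    simp only [prod_range_succ, Nat.factorial_succ, Nat.cast_mul, Nat.cast_add, Nat.cast_one,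
      pow_succ]
    field_simp
    ring
  rw [Real.norm_of_nonneg (hgpos _), Real.norm_of_nonneg (hgpos _), hstep]
  have : (((k : ℝ) + 2) * (s + k) * y / ((k : ℝ) + 1) ^ 2) ≤ r := by
    rw [div_le_iff₀ (by positivity)]; nlinarith [key]
  calc g k * (((k : ℝ) + 2) * (s + k) * y / ((k : ℝ) + 1) ^ 2) ≤ g k * r :=
        mul_le_mul_of_nonneg_left this (hgpos k)
    _ = r * g k := mul_comm _ _



lemma summable_A {s : ℝ} (hs : 0 < s) {x : ℝ} (hx : |x| < 1) :
    Summable (fun k : ℕ => (∏ i ∈ range k, (s + i)) / (k.factorial : ℝ) * x ^ k) := by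
  apply Summable.of_norm_bounded (sum_master hs (abs_nonneg x) hx)
  intro k
  have hp := (poch_pos hs k).le
  rw [norm_mul, norm_div, norm_pow, Real.norm_of_nonneg hp,
    Real.norm_of_nonneg (by positivity : (0:ℝ) ≤ (k.factorial:ℝ)), Real.norm_eq_abs]
  have h1 : (∏ i ∈ range k, (s + i)) / (k.factorial : ℝ) * |x| ^ k
      ≤ ((k : ℝ) + 1) * (∏ i ∈ range k, (s + i)) / (k.factorial : ℝ) * |x| ^ k := by
    have : (∏ i ∈ range k, (s + i)) / (k.factorial : ℝ)
        ≤ ((k : ℝ) + 1) * (∏ i ∈ range k, (s + i)) / (k.factorial : ℝ) := by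
      apply div_le_div_of_nonneg_right ?_ (by positivity)
      nlinarith [hp, Nat.cast_nonneg (α := ℝ) k]
    exact mul_le_mul_of_nonneg_right this (by positivity)
  exact h1

/-- The binomial series `∑ (s)_k / k! x^k = (1-x)^(-s)` for `0 < s`, `|x| < 1`. -/
lemma binom_series {s : ℝ} (hs : 0 < s) {x : ℝ} (hx : |x| < 1) :
    HasSum (fun k : ℕ => (∏ i ∈ range k, (s + i)) / (k.factorial : ℝ) * x ^ k)
      ((1 - x) ^ (-s)) := by
  set A : ℕ → ℝ := fun k => (∏ i ∈ range k, (s + i)) / (k.factorial : ℝ) with hA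
  set g : ℝ → ℝ := fun y => ∑' k, A k * y ^ k with hgdef
  set ρ : ℝ := (1 + |x|) / 2 with hρ
  have hρ0 : 0 < ρ := by positivity
  have hρ1 : ρ < 1 := by rw [hρ]; linarith
  have hxρ : |x| < ρ := by rw [hρ]; linarith
  set t : Set ℝ := Ioo (-ρ) ρ with ht
  have hto : IsOpen t := isOpen_Ioo
  have htc : IsPreconnected t := (convex_Ioo _ _).isPreconnected
  have h0t : (0:ℝ) ∈ t := by constructor <;> simp [hρ0] <;> linarith
  have hxt : x ∈ t := by
    constructor
    · linarith [neg_abs_le x]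
    · linarith [le_abs_self x]
  have habs : ∀ y ∈ t, |y| < ρ := by
    intro y hy; rw [abs_lt]; exact ⟨hy.1, hy.2⟩
  -- derivative series and bound
  set f' : ℕ → ℝ → ℝ := fun k y => A k * ((k : ℝ) * y ^ (k - 1)) with hf'
  set u : ℕ → ℝ := fun k => A k * ((k : ℝ) * ρ ^ (k - 1)) with hu
  have hAnn : ∀ k, 0 ≤ A k := fun k => by
    have := (poch_pos hs k).le; positivity
  have hu_sum : Summable u := by
    have h := (sum_master hs hρ0.le hρ1).mul_left ρ⁻¹
    apply Summable.of_norm_bounded h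
    intro k
    rw [Real.norm_of_nonneg (by have := hAnn k; positivity)]
    have goalEq : u k = A k * ((k:ℝ) * ρ ^ (k - 1)) := rfl
    rw [goalEq]
    rcases Nat.eq_zero_or_pos k with rfl | hk
    · simp; positivity
    · have hkk : k - 1 + 1 = k := Nat.succ_pred_eq_of_pos hk
      have hpow : ρ ^ (k - 1) = ρ⁻¹ * ρ ^ k := by
        rw [← hkk, pow_succ]; field_simp; rw [Nat.add_sub_cancel]
      rw [hpow]
      have h1 : A k * ((k:ℝ) * (ρ⁻¹ * ρ ^ k)) = ρ⁻¹ * ((k:ℝ) * A k * ρ ^ k) := by ring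
      rw [h1]
      apply mul_le_mul_of_nonneg_left ?_ (by positivity)
      have : (k : ℝ) * A k ≤ ((k:ℝ)+1) * A k := by
        nlinarith [hAnn k]
      calc (k:ℝ) * A k * ρ ^ k ≤ ((k:ℝ)+1) * A k * ρ ^ k := by
            apply mul_le_mul_of_nonneg_right this (by positivity)
        _ = ((k:ℝ)+1) * (∏ i ∈ range k, (s + i)) / (k.factorial : ℝ) * ρ ^ k := by
            rw [hA]; ring
  have hderiv : ∀ (k : ℕ), ∀ y ∈ t, HasDerivAt (fun z => A k * z ^ k) (f' k y) y := by
    intro k y _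
    exact (hasDerivAt_pow k y).const_mul (A k)
  have hbound : ∀ (k : ℕ), ∀ y ∈ t, ‖f' k y‖ ≤ u k := by
    intro k y hy
    rw [hf', hu, norm_mul, Real.norm_of_nonneg (hAnn k), norm_mul, norm_pow,
      Real.norm_natCast, Real.norm_eq_abs]
    apply mul_le_mul_of_nonneg_left ?_ (hAnn k)
    apply mul_le_mul_of_nonneg_left ?_ (Nat.cast_nonneg k)
    exact pow_le_pow_left₀ (abs_nonneg y) (habs y hy).le _
  have hg0sum : Summable (fun k => A k * (0:ℝ) ^ k) := by
    apply summable_of_ne_finset_zero (s := {0})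
    intro k hk
    have : k ≠ 0 := by simpa using hk
    simp [zero_pow this]
  have hgderiv : ∀ y ∈ t, HasDerivAt g (∑' k, f' k y) y := fun y hy =>
    hasDerivAt_tsum_of_isPreconnected hu_sum hto htc hderiv hbound h0t hg0sum hy
  -- summabilities at any point of t
  have hsumA : ∀ y ∈ t, Summable (fun k => A k * y ^ k) := by
    intro y hy
    exact summable_A hs (lt_trans (habs y hy) hρ1)
  have hsumf' : ∀ y ∈ t, Summable (fun k => f' k y) := fun y hy =>
    Summable.of_norm_bounded hu_sum (fun k => hbound k y hy)
  -- key ODE identity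
  have hkey : ∀ y ∈ t, (1 - y) * (∑' k, f' k y) = s * g y := by
    intro y hy
    have hs1 : Summable (fun k => f' (k+1) y) := (hsumf' y hy).comp_injective (add_left_injective 1)
    have e0 : ∑' k, f' k y = ∑' k, f' (k + 1) y := by
      rw [Summable.tsum_eq_zero_add (hsumf' y hy)]
      simp [hf']
    have e1 : ∀ k : ℕ, f' (k+1) y = (s + k) * (A k * y ^ k) := by
      intro k
      rw [hf', hA]
      simp only [Nat.add_sub_cancel, prod_range_succ, Nat.factorial_succ, Nat.cast_mul,
        Nat.cast_add, Nat.cast_one]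
      have : ((k:ℝ) + 1) ≠ 0 := by positivity
      field_simp
    have e2 : ∀ k : ℕ, y * f' k y = (k : ℝ) * (A k * y ^ k) := by
      intro k
      rcases Nat.eq_zero_or_pos k with rfl | hk
      · simp [hf']
      · have hkk : k - 1 + 1 = k := Nat.succ_pred_eq_of_pos hk
        rw [hf']
        rw [← hkk, pow_succ]
        push_cast [hkk]
        ring
    have hsum2 : Summable (fun k : ℕ => (k:ℝ) * (A k * y ^ k)) := by
      apply Summable.congr ((hsumf' y hy).mul_left y)
      intro k; exact e2 k
    have hsum3 : Summable (fun k : ℕ => s * (A k * y ^ k)) := (hsumA y hy).mul_left s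
    have big : ∑' k, f' (k+1) y = s * g y + ∑' (k : ℕ), (k:ℝ) * (A k * y ^ k) := by
      rw [hgdef]
      rw [← tsum_mul_left (a := s)]
      rw [← Summable.tsum_add hsum3 hsum2]
      apply tsum_congr
      intro k
      rw [e1]; ring
    have ytsum : y * (∑' k, f' k y) = ∑' (k : ℕ), (k:ℝ) * (A k * y ^ k) := by
      rw [← tsum_mul_left (a := y)]
      exact tsum_congr e2
    have : ∑' k, f' k y = s * g y + y * (∑' k, f' k y) := by
      conv_lhs => rw [e0, big]
      rw [ytsum]
    linarith [this]
  -- h = g * (1-x)^s has zero derivative on t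
  set h : ℝ → ℝ := fun y => g y * (1 - y) ^ s with hh
  have hhderiv : ∀ y ∈ t, HasDerivAt h 0 y := by
    intro y hy
    have hy1 : (0:ℝ) < 1 - y := by
      have := (habs y hy); rw [abs_lt] at this; linarith [hρ1, this.2]
    have d1 : HasDerivAt (fun z : ℝ => 1 - z) (-1) y := by
      simpa using (hasDerivAt_id y).const_sub 1
    have d2 : HasDerivAt (fun z : ℝ => (1 - z) ^ s) (-1 * s * (1 - y) ^ (s - 1)) y :=
      d1.rpow_const (Or.inl hy1.ne')
    have d3 : HasDerivAt (fun z => g z * (1 - z) ^ s) ((∑' k, f' k y) * (1 - y) ^ s + g y * (-1 * s * (1 - y) ^ (s - 1))) y := (hgderiv y hy).mul d2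
    convert d3 using 1
    have hr : (1 - y) ^ s = (1 - y) ^ (s - 1) * (1 - y) := by
      rw [← Real.rpow_add_one hy1.ne' (s-1)]
      norm_num
    rw [hr]
    linear_combination (-(1 - y) ^ (s - 1)) * (hkey y hy)
  -- conclude h x = h 0
  have hcont : ContinuousOn h t := fun y hy => ((hhderiv y hy).continuousAt).continuousWithinAt
  have hx0 : h x = h 0 := by
    rcases le_total 0 x with hc | hc
    · have hsub : Icc (0:ℝ) x ⊆ t := by
        intro z hz
        constructor
        · linarith [hz.1, hρ0]
        · have : z ≤ x := hz.2
          calc z ≤ x := this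
            _ ≤ |x| := le_abs_self x
            _ < ρ := hxρ
      exact constant_of_has_deriv_right_zero (hcont.mono hsub)
        (fun z hz => ((hhderiv z (hsub (Ico_subset_Icc_self hz))).hasDerivWithinAt))
        x (by constructor <;> simp [hc])
    · have hsub : Icc x (0:ℝ) ⊆ t := by
        intro z hz
        constructor
        · calc -ρ < -|x| := by linarith [hxρ]
            _ ≤ x := neg_abs_le x
            _ ≤ z := hz.1
        · linarith [hz.2, hρ0]
      have := constant_of_has_deriv_right_zero (hcont.mono hsub)
        (fun z hz => ((hhderiv z (hsub (Ico_subset_Icc_self hz))).hasDerivWithinAt))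
        0 (by constructor <;> simp [hc])
      -- this : h 0 = h x
      rw [this]
  have hg0 : g 0 = 1 := by
    have e : g 0 = ∑' k, A k * (0:ℝ) ^ k := rfl
    rw [e, tsum_eq_single 0]
    · simp [hA]
    · intro k hk; simp [zero_pow hk]
  have hx1 : (0:ℝ) < 1 - x := by
    have := hxρ; rw [abs_lt] at hx; linarith [hx.2]
  have hval : g x * (1 - x) ^ s = 1 := by
    have h2 : g x * (1 - x) ^ s = g 0 * (1 - 0) ^ s := hx0
    rw [hg0] at h2
    simpa [Real.one_rpow] using h2
  have hne : (1 - x) ^ s ≠ 0 := (Real.rpow_pos_of_pos hx1 s).ne'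
  have hgx : (∑' k, A k * x ^ k) = (1 - x) ^ (-s) := by
    rw [Real.rpow_neg hx1.le]
    exact eq_inv_of_mul_eq_one_left hval
  have final : HasSum (fun k => A k * x ^ k) ((1 - x) ^ (-s)) := hgx ▸ (hsumA x hxt).hasSum
  rw [hA] at final
  exact final


/-- `∫₀^π sin^m = Γ(1/2)Γ((m+1)/2)/Γ(m/2+1)`. -/
lemma sinint (m : ℕ) : ∫ x in (0:ℝ)..π, Real.sin x ^ m
    = Real.Gamma (1/2) * Real.Gamma (((m:ℝ)+1)/2) / Real.Gamma ((m:ℝ)/2 + 1) := by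
  induction m using Nat.twoStepInduction with
  | zero =>
    simp only [Nat.cast_zero, pow_zero, integral_one, sub_zero, zero_div, zero_add,
      Real.Gamma_one, div_one]
    rw [Real.Gamma_one_half_eq, Real.mul_self_sqrt Real.pi_pos.le]
  | one =>
    simp only [Nat.cast_one, pow_one, integral_sin, Real.cos_zero, Real.cos_pi]
    rw [show ((1:ℝ)/2 + 1) = (1/2) + 1 by norm_num,
      Real.Gamma_add_one (by norm_num : (1:ℝ)/2 ≠ 0), Real.Gamma_one_half_eq,
      show ((1:ℝ)+1)/2 = 1 by norm_num, Real.Gamma_one]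
    have h : Real.sqrt π ≠ 0 := by positivity
    field_simp
    ring
  | more m ih _ =>
    rw [integral_sin_pow m]
    simp only [Real.sin_zero, Real.sin_pi, zero_pow (Nat.succ_ne_zero m), Real.cos_zero,
      Real.cos_pi]
    rw [ih]
    push_cast
    rw [show ((m:ℝ)+2+1)/2 = ((m:ℝ)+1)/2 + 1 by ring,
      show ((m:ℝ)+2)/2 + 1 = ((m:ℝ)/2 + 1) + 1 by ring,
      Real.Gamma_add_one (s := ((m:ℝ)+1)/2) (by positivity),
      Real.Gamma_add_one (s := (m:ℝ)/2+1) (by positivity)]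
    have h1 : Real.Gamma ((m:ℝ)/2 + 1) ≠ 0 := (Real.Gamma_pos_of_pos (by positivity)).ne'
    have h2 : ((m:ℝ)+2) ≠ 0 := by positivity
    have h3 : ((m:ℝ)/2+1) ≠ 0 := by positivity
    field_simp
    ring


/-- odd cosine powers integrate to zero against sine powers on `[0, π]`. -/
lemma odd_cos_int (m l : ℕ) :
    ∫ x in (0:ℝ)..π, Real.cos x ^ (2*l+1) * Real.sin x ^ m = 0 := by
  have h := integral_sin_pow_mul_cos_pow_odd (a := 0) (b := π) m l
  rw [Real.sin_zero, Real.sin_pi, intervalIntegral.integral_same] at h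
  have h2 : (∫ x in (0:ℝ)..π, Real.cos x ^ (2*l+1) * Real.sin x ^ m)
      = ∫ x in (0:ℝ)..π, Real.sin x ^ m * Real.cos x ^ (2*l+1) :=
    intervalIntegral.integral_congr (fun x _ => by ring)
  rw [h2, h]

/-- the Wallis-type integral in terms of Gamma. -/
lemma wallis (m l : ℕ) :
    ∫ x in (0:ℝ)..π, Real.cos x ^ (2*l) * Real.sin x ^ m
      = Real.Gamma ((l:ℝ) + 1/2) * Real.Gamma (((m:ℝ)+1)/2) / Real.Gamma ((l:ℝ) + (m:ℝ)/2 + 1) := by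
  induction l with
  | zero =>
    simp only [Nat.mul_zero, Nat.cast_zero, zero_add, pow_zero, one_mul]
    exact sinint m
  | succ l ih =>
    -- integration by parts
    have hu : ∀ x ∈ uIcc (0:ℝ) π, HasDerivAt (fun y => Real.cos y ^ (2*l+1))
        (((2*l+1 : ℕ) : ℝ) * Real.cos x ^ (2*l) * (-Real.sin x)) x := by
      intro x _
      simpa [mul_comm, mul_assoc, mul_left_comm] using (Real.hasDerivAt_cos x).fun_pow (2*l+1)
    have hv : ∀ x ∈ uIcc (0:ℝ) π, HasDerivAt (fun y => Real.sin y ^ (m+1) / ((m:ℝ)+1))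
        (Real.cos x * Real.sin x ^ m) x := by
      intro x _
      have h1 : HasDerivAt (fun y => Real.sin y ^ (m+1))
          (((m+1 : ℕ) : ℝ) * Real.sin x ^ m * Real.cos x) x := by
        simpa [mul_comm, mul_assoc, mul_left_comm] using (Real.hasDerivAt_sin x).fun_pow (m+1)
      have h2 : HasDerivAt (fun y => Real.sin y ^ (m+1) / ((m:ℝ)+1)) (((m+1 : ℕ) : ℝ) * Real.sin x ^ m * Real.cos x / ((m:ℝ)+1)) x := h1.div_const ((m:ℝ)+1)
      convert h2 using 1
      push_cast
      field_simp
    have hm1 : ((m:ℝ)+1) ≠ 0 := by positivity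
    have parts := intervalIntegral.integral_mul_deriv_eq_deriv_mul hu hv
      (by apply Continuous.intervalIntegrable; fun_prop)
      (by apply Continuous.intervalIntegrable; fun_prop)
    rw [Real.sin_zero, Real.sin_pi] at parts
    simp only [zero_pow (Nat.succ_ne_zero m), zero_div, mul_zero, zero_mul, sub_zero,
      zero_sub] at parts
    -- parts : ∫ cos^{2l+1} * (cos * sin^m) = - ∫ ((2l+1) cos^{2l} (-sin)) * (sin^{m+1}/(m+1))
    have lhs_eq : (∫ x in (0:ℝ)..π, Real.cos x ^ (2*l+1) * (Real.cos x * Real.sin x ^ m))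
        = ∫ x in (0:ℝ)..π, Real.cos x ^ (2*(l+1)) * Real.sin x ^ m := by
      apply intervalIntegral.integral_congr
      intro x _
      ring
    have rhs_eq : (∫ x in (0:ℝ)..π,
          (((2*l+1 : ℕ) : ℝ) * Real.cos x ^ (2*l) * (-Real.sin x)) * (Real.sin x ^ (m+1) / ((m:ℝ)+1)))
        = -(((2*l+1 : ℕ) : ℝ) / ((m:ℝ)+1)) * ∫ x in (0:ℝ)..π, Real.cos x ^ (2*l) * Real.sin x ^ (m+2) := by
      rw [← intervalIntegral.integral_const_mul]
      apply intervalIntegral.integral_congr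
      intro x _
      field_simp
      ring
    have split : (∫ x in (0:ℝ)..π, Real.cos x ^ (2*l) * Real.sin x ^ (m+2))
        = (∫ x in (0:ℝ)..π, Real.cos x ^ (2*l) * Real.sin x ^ m)
          - ∫ x in (0:ℝ)..π, Real.cos x ^ (2*(l+1)) * Real.sin x ^ m := by
      rw [← intervalIntegral.integral_sub
        (by apply Continuous.intervalIntegrable; fun_prop)
        (by apply Continuous.intervalIntegrable; fun_prop)]
      apply intervalIntegral.integral_congr
      intro x _
      have hpy := Real.sin_sq_add_cos_sq x
      have hs : Real.sin x ^ (m+2) = Real.sin x ^ m - Real.sin x ^ m * Real.cos x ^ 2 :=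
        calc Real.sin x ^ (m+2) = Real.sin x ^ m * Real.sin x ^ 2 := by ring
          _ = Real.sin x ^ m * (1 - Real.cos x ^ 2) := by
              rw [show Real.sin x ^ 2 = 1 - Real.cos x ^ 2 by linarith]
          _ = Real.sin x ^ m - Real.sin x ^ m * Real.cos x ^ 2 := by ring
      simp only [hs]
      ring
    set I0 := ∫ x in (0:ℝ)..π, Real.cos x ^ (2*l) * Real.sin x ^ m with hI0
    set I1 := ∫ x in (0:ℝ)..π, Real.cos x ^ (2*(l+1)) * Real.sin x ^ m with hI1
    rw [lhs_eq, rhs_eq, split] at parts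
    -- parts : I1 = -(-((2l+1)/(m+1)) * (I0 - I1))  (roughly); solve for I1
    have hrec : I1 = (2*(l:ℝ)+1) / ((m:ℝ) + 2*l + 2) * I0 := by
      have hd : ((m:ℝ) + 2*l + 2) ≠ 0 := by positivity
      push_cast at parts
      field_simp at parts ⊢
      linarith [parts]
    rw [hrec, ih]
    push_cast
    rw [show ((l:ℝ)+1) + 1/2 = ((l:ℝ)+1/2) + 1 by ring,
      show ((l:ℝ)+1) + (m:ℝ)/2 + 1 = ((l:ℝ) + (m:ℝ)/2 + 1) + 1 by ring,
      Real.Gamma_add_one (s := (l:ℝ)+1/2) (by positivity),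
      Real.Gamma_add_one (s := (l:ℝ) + (m:ℝ)/2 + 1) (by positivity)]
    have h1 : Real.Gamma ((l:ℝ) + (m:ℝ)/2 + 1) ≠ 0 := (Real.Gamma_pos_of_pos (by positivity)).ne'
    have h2 : ((m:ℝ) + 2*l + 2) ≠ 0 := by positivity
    have h3 : ((l:ℝ) + (m:ℝ)/2 + 1) ≠ 0 := by positivity
    field_simp
    ring


theorem stmt_9 (n : ℕ) (hn : 3 ≤ n) (θ θ₁ a b : ℝ)
    (h1 : 0 ≤ θ₁) (h2 : θ₁ < θ) (h3 : θ ≤ π)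
    (ha : a = Real.sin θ * Real.sin θ₁) (hb : b = 1 - Real.cos θ * Real.cos θ₁) :
    b ^ ((n : ℝ) / 2 - 1) *
      ∫ φ in (0:ℝ)..π,
        (1 - Real.cos θ * Real.cos θ₁ - Real.cos φ * Real.sin θ * Real.sin θ₁)
          ^ ((1 : ℝ) - n / 2) * Real.sin φ ^ (n - 3)
    = ∑' l : ℕ,
        ((∏ i ∈ Finset.range (2 * l), ((n : ℝ) / 2 - 1 + i)) * Real.Gamma ((n : ℝ) / 2 - 1)
          * Real.Gamma ((l : ℝ) + 1 / 2)
          / ((Nat.factorial (2 * l) : ℝ) * Real.Gamma ((n : ℝ) / 2 + l - 1 / 2)))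
          * (a / b) ^ (2 * l) := by
  -- basic setup
  set s : ℝ := (n : ℝ) / 2 - 1 with hsdef
  have hn3 : (3:ℝ) ≤ (n:ℝ) := by exact_mod_cast hn
  have hs : 0 < s := by rw [hsdef]; linarith
  set m : ℕ := n - 3 with hmdef
  have hm : (m:ℝ) = (n:ℝ) - 3 := by
    rw [hmdef]; push_cast [Nat.cast_sub hn]; ring
  have hθ0 : 0 < θ := lt_of_le_of_lt h1 h2
  have hθ1π : θ₁ ≤ π := le_trans h2.le h3
  have hsθ : 0 ≤ Real.sin θ := Real.sin_nonneg_of_nonneg_of_le_pi hθ0.le h3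
  have hsθ1 : 0 ≤ Real.sin θ₁ := Real.sin_nonneg_of_nonneg_of_le_pi h1 hθ1π
  have ha0 : 0 ≤ a := by rw [ha]; positivity
  have hab : a < b := by
    have hc1 : Real.cos (θ - θ₁) < Real.cos 0 :=
      Real.cos_lt_cos_of_nonneg_of_le_pi le_rfl (by linarith) (by linarith)
    rw [Real.cos_zero, Real.cos_sub] at hc1
    rw [ha, hb]; linarith
  have hb0 : 0 < b := lt_of_le_of_lt ha0 hab
  set c : ℝ := a / b with hcdef
  have hc0 : 0 ≤ c := div_nonneg ha0 hb0.le
  have hc1 : c < 1 := (div_lt_one hb0).2 hab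
  have hcabs : |c| < 1 := by rw [abs_of_nonneg hc0]; exact hc1
  -- positivity of the base
  have hbase : ∀ φ : ℝ, 0 < 1 - c * Real.cos φ := by
    intro φ
    have h4 : c * Real.cos φ ≤ c * 1 :=
      mul_le_mul_of_nonneg_left (Real.cos_le_one φ) hc0
    linarith
  have hEeq : ∀ φ : ℝ, 1 - Real.cos θ * Real.cos θ₁ - Real.cos φ * Real.sin θ * Real.sin θ₁
      = b * (1 - c * Real.cos φ) := by
    intro φ
    have hbe : b * (1 - c * Real.cos φ) = b - a * Real.cos φ := by
      rw [hcdef]; field_simp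
    rw [hbe, ha, hb]; ring
  -- Step A: pull out b^s
  have stepA : b ^ ((n : ℝ) / 2 - 1) *
      (∫ φ in (0:ℝ)..π,
        (1 - Real.cos θ * Real.cos θ₁ - Real.cos φ * Real.sin θ * Real.sin θ₁)
          ^ ((1 : ℝ) - n / 2) * Real.sin φ ^ (n - 3))
      = ∫ φ in (0:ℝ)..π, (1 - c * Real.cos φ) ^ (-s) * Real.sin φ ^ m := by
    have hint : ∀ φ : ℝ,
        (1 - Real.cos θ * Real.cos θ₁ - Real.cos φ * Real.sin θ * Real.sin θ₁) ^ ((1 : ℝ) - n / 2)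
          * Real.sin φ ^ (n - 3)
        = b ^ (-s) * ((1 - c * Real.cos φ) ^ (-s) * Real.sin φ ^ m) := by
      intro φ
      rw [hEeq φ, Real.mul_rpow hb0.le (hbase φ).le]
      rw [show (1:ℝ) - (n:ℝ)/2 = -s by rw [hsdef]; ring]
      rw [show n - 3 = m from rfl]
      ring
    rw [intervalIntegral.integral_congr (fun φ _ => hint φ),
      intervalIntegral.integral_const_mul]
    rw [← mul_assoc, ← Real.rpow_add hb0]
    norm_num
    rw [show (n:ℝ)/2 - 1 + -s = 0 by rw [hsdef]; ring, Real.rpow_zero, one_mul]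
  rw [stepA]
  -- the summand functions
  set F : ℕ → ℝ → ℝ := fun k φ =>
    (∏ i ∈ range k, (s + i)) / (k.factorial : ℝ) * (c * Real.cos φ) ^ k * Real.sin φ ^ m
    with hFdef
  have hptwise : ∀ φ : ℝ, HasSum (fun k => F k φ) ((1 - c * Real.cos φ) ^ (-s) * Real.sin φ ^ m) := by
    intro φ
    have habs : |c * Real.cos φ| < 1 := by
      rw [abs_mul]
      calc |c| * |Real.cos φ| ≤ |c| * 1 :=
            mul_le_mul_of_nonneg_left (Real.abs_cos_le_one φ) (abs_nonneg c)
        _ = |c| := mul_one _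
        _ < 1 := hcabs
    exact (binom_series hs habs).mul_right _
  -- Step C: swap sum and integral
  have hFcont : ∀ k, Continuous (F k) := by
    intro k; rw [hFdef]; fun_prop
  have hFbound : ∀ k φ, ‖F k φ‖ ≤ (∏ i ∈ range k, (s + i)) / (k.factorial : ℝ) * c ^ k := by
    intro k φ
    have hp := (poch_pos hs k).le
    have hp' : (0:ℝ) ≤ (∏ i ∈ range k, (s + i)) / (k.factorial : ℝ) := by positivity
    have e : F k φ = (∏ i ∈ range k, (s + i)) / (k.factorial : ℝ)
        * (c * Real.cos φ) ^ k * Real.sin φ ^ m := rfl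
    rw [Real.norm_eq_abs, e, abs_mul, abs_mul, abs_pow, abs_pow, abs_mul, abs_of_nonneg hp',
      abs_of_nonneg hc0]
    have h5 : |Real.cos φ| ≤ 1 := Real.abs_cos_le_one φ
    have h6 : |Real.sin φ| ≤ 1 := Real.abs_sin_le_one φ
    calc (∏ i ∈ range k, (s + i)) / (k.factorial : ℝ) * (c * |Real.cos φ|) ^ k * |Real.sin φ| ^ m
        ≤ (∏ i ∈ range k, (s + i)) / (k.factorial : ℝ) * (c * 1) ^ k * 1 ^ m := by
          apply mul_le_mul
          · apply mul_le_mul_of_nonneg_left ?_ hp'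
            apply pow_le_pow_left₀ (by positivity)
            exact mul_le_mul_of_nonneg_left h5 hc0
          · exact pow_le_pow_left₀ (abs_nonneg _) h6 m
          · positivity
          · positivity
      _ = (∏ i ∈ range k, (s + i)) / (k.factorial : ℝ) * c ^ k := by norm_num
  have hμIoc : (volume (Ioc (0:ℝ) π)).toReal = π := by
    rw [Real.volume_Ioc, sub_zero, ENNReal.toReal_ofReal Real.pi_pos.le]
  have hF_int : ∀ k, Integrable (F k) (volume.restrict (Ioc (0:ℝ) π)) := fun k =>
    (hFcont k).integrableOn_Ioc
  have hF_norm_int : ∀ k, (∫ φ in Ioc (0:ℝ) π, ‖F k φ‖)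
      ≤ π * ((∏ i ∈ range k, (s + i)) / (k.factorial : ℝ) * c ^ k) := by
    intro k
    have h7 : (∫ φ in Ioc (0:ℝ) π, ‖F k φ‖)
        ≤ ∫ _ in Ioc (0:ℝ) π, (∏ i ∈ range k, (s + i)) / (k.factorial : ℝ) * c ^ k := by
      apply setIntegral_mono_on (hF_int k).norm (integrableOn_const ?_)
        measurableSet_Ioc (fun φ _ => hFbound k φ)
      rw [Real.volume_Ioc]
      exact ENNReal.ofReal_ne_top
    rw [setIntegral_const, measureReal_def, hμIoc, smul_eq_mul] at h7
    exact h7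
  have hF_norm_nonneg : ∀ k, 0 ≤ (∫ φ in Ioc (0:ℝ) π, ‖F k φ‖) := fun k =>
    integral_nonneg (fun φ => norm_nonneg _)
  have hF_sum : Summable (fun k => ∫ φ in Ioc (0:ℝ) π, ‖F k φ‖) := by
    apply Summable.of_nonneg_of_le hF_norm_nonneg hF_norm_int
    exact (summable_A hs hcabs).mul_left π
  have swap : (∑' k, ∫ φ in Ioc (0:ℝ) π, F k φ) = ∫ φ in Ioc (0:ℝ) π, (∑' k, F k φ) :=
    MeasureTheory.integral_tsum_of_summable_integral_norm hF_int hF_sum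
  -- rewrite main integral
  have main_eq : (∫ φ in (0:ℝ)..π, (1 - c * Real.cos φ) ^ (-s) * Real.sin φ ^ m)
      = ∑' k, ∫ φ in (0:ℝ)..π, F k φ := by
    rw [intervalIntegral.integral_of_le Real.pi_pos.le]
    have e : ∀ φ : ℝ, (1 - c * Real.cos φ) ^ (-s) * Real.sin φ ^ m = ∑' k, F k φ := fun φ =>
      (hptwise φ).tsum_eq.symm
    rw [MeasureTheory.setIntegral_congr_fun measurableSet_Ioc (fun φ _ => e φ), ← swap]
    apply tsum_congr
    intro k
    rw [intervalIntegral.integral_of_le Real.pi_pos.le]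
  rw [main_eq]
  -- Step D: evaluate each integral
  set J : ℕ → ℝ := fun k => ∫ x in (0:ℝ)..π, Real.cos x ^ k * Real.sin x ^ m with hJdef
  have hint_eq : ∀ k, (∫ φ in (0:ℝ)..π, F k φ)
      = (∏ i ∈ range k, (s + i)) / (k.factorial : ℝ) * c ^ k * J k := by
    intro k
    rw [hJdef, ← intervalIntegral.integral_const_mul]
    apply intervalIntegral.integral_congr
    intro φ _
    show F k φ = _
    rw [hFdef]
    simp only [mul_pow]
    ring
  set f : ℕ → ℝ := fun k => (∏ i ∈ range k, (s + i)) / (k.factorial : ℝ) * c ^ k * J k with hfdef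
  have hfs : Summable f := by
    apply Summable.of_norm_bounded hF_sum
    intro k
    have : f k = ∫ φ in (0:ℝ)..π, F k φ := (hint_eq k).symm
    rw [this, intervalIntegral.integral_of_le Real.pi_pos.le]
    exact norm_integral_le_integral_norm _
  have sum_f : (∑' k, ∫ φ in (0:ℝ)..π, F k φ) = ∑' k, f k :=
    tsum_congr (fun k => hint_eq k)
  rw [sum_f]
  -- odd terms vanish
  have hodd : ∀ l : ℕ, f (2*l+1) = 0 := by
    intro l
    have : J (2*l+1) = 0 := odd_cos_int m l
    rw [hfdef]
    simp only [this, mul_zero]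
  have he : Summable (fun l => f (2*l)) :=
    hfs.comp_injective (fun x y h => by omega)
  have ho : Summable (fun l => f (2*l+1)) :=
    hfs.comp_injective (fun x y h => by omega)
  rw [← tsum_even_add_odd he ho]
  have hzero : (∑' l : ℕ, f (2*l+1)) = 0 := by
    rw [tsum_congr hodd]; exact tsum_zero
  rw [hzero, add_zero]
  -- identify even terms
  apply tsum_congr
  intro l
  have hJeval : J (2*l) = Real.Gamma ((l:ℝ) + 1/2) * Real.Gamma (((m:ℝ)+1)/2)
      / Real.Gamma ((l:ℝ) + (m:ℝ)/2 + 1) := wallis m l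
  have hg1 : ((m:ℝ)+1)/2 = (n:ℝ)/2 - 1 := by rw [hm]; ring
  have hg2 : (l:ℝ) + (m:ℝ)/2 + 1 = (n:ℝ)/2 + l - 1/2 := by rw [hm]; ring
  rw [hfdef]
  show (∏ i ∈ range (2*l), (s + i)) / ((2*l).factorial : ℝ) * c ^ (2*l) * J (2*l) = _
  rw [hJeval, hg1, hg2, hsdef, hcdef]
  field_simp
end
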